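/- With the hypotheses of the abstract mixed problem (a coercive symmetric continuous on H, c coercive symmetric continuous on V, b continuous on H × V, weak semi-norm |q|_V̄ = sup_v b(v,q)/‖v‖_H), there exists a constant C₁ depending only on the continuity/coercivity constant such that for all u ∈ H, p ∈ V, ε ∈ (0,1]: ‖u‖_H + |p|_V̄ + ε‖p‖_V ≤ C₁ · sup_{(v,q)≠0} (a(u,v)+b(v,p)-b(u,q)+ε²c(p,q))/(‖v‖_H + |q|_V̄ + ε‖q‖_V). -/
import Mathlib


/-- The weak (semi) norm `|q|_V̄ = sup_{v ≠ 0} b(v,q)/‖v‖_H`. -/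
noncomputable def weakSemiNorm {H V : Type*} [NormedAddCommGroup H] [InnerProductSpace ℝ H]
    [NormedAddCommGroup V] [InnerProductSpace ℝ V]
    (b : H →ₗ[ℝ] V →ₗ[ℝ] ℝ) (q : V) : ℝ :=
  ⨆ v : {v : H // v ≠ 0}, b v q / ‖(v : H)‖

section Helpers

variable {H V : Type} [NormedAddCommGroup H] [InnerProductSpace ℝ H]
  [NormedAddCommGroup V] [InnerProductSpace ℝ V]

lemma wsn_zero (b : H →ₗ[ℝ] V →ₗ[ℝ] ℝ) : weakSemiNorm b 0 = 0 := by
  unfold weakSemiNorm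
  simp only [map_zero, zero_div]
  exact Real.iSup_const_zero

lemma wsn_bdd {C : ℝ} (b : H →ₗ[ℝ] V →ₗ[ℝ] ℝ)
    (hb : ∀ (v : H) (q : V), |b v q| ≤ C * ‖v‖ * ‖q‖) (q : V) :
    BddAbove (Set.range fun v : {v : H // v ≠ 0} => b v q / ‖(v : H)‖) := by
  refine ⟨C * ‖q‖, ?_⟩
  rintro x ⟨⟨v, hv⟩, rfl⟩
  have hv' : (0:ℝ) < ‖v‖ := norm_pos_iff.mpr hv
  rw [div_le_iff₀ hv']
  calc b v q ≤ |b v q| := le_abs_self _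
    _ ≤ C * ‖v‖ * ‖q‖ := hb v q
    _ = C * ‖q‖ * ‖v‖ := by ring

lemma wsn_nonneg {C : ℝ} (b : H →ₗ[ℝ] V →ₗ[ℝ] ℝ)
    (hb : ∀ (v : H) (q : V), |b v q| ≤ C * ‖v‖ * ‖q‖) (q : V) :
    0 ≤ weakSemiNorm b q := by
  unfold weakSemiNorm
  rcases isEmpty_or_nonempty {v : H // v ≠ 0} with h | h
  · rw [Real.iSup_of_isEmpty]
  · obtain ⟨⟨v, hv⟩⟩ := h
    have hbdd := wsn_bdd b hb q
    have h1 := le_ciSup hbdd ⟨v, hv⟩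
    have h2 := le_ciSup hbdd ⟨-v, neg_ne_zero.mpr hv⟩
    simp only [map_neg, LinearMap.neg_apply, norm_neg, neg_div] at h1 h2
    linarith

lemma abs_b_le_wsn {C : ℝ} (b : H →ₗ[ℝ] V →ₗ[ℝ] ℝ)
    (hb : ∀ (v : H) (q : V), |b v q| ≤ C * ‖v‖ * ‖q‖) (v : H) (q : V) :
    |b v q| ≤ weakSemiNorm b q * ‖v‖ := by
  rcases eq_or_ne v 0 with rfl | hv
  · simp
  · have hv' : (0:ℝ) < ‖v‖ := norm_pos_iff.mpr hv
    have h1 : b v q / ‖v‖ ≤ weakSemiNorm b q := le_ciSup (wsn_bdd b hb q) ⟨v, hv⟩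
    have h2 : b (-v) q / ‖(-v : H)‖ ≤ weakSemiNorm b q :=
      le_ciSup (wsn_bdd b hb q) ⟨-v, neg_ne_zero.mpr hv⟩
    simp only [map_neg, LinearMap.neg_apply, norm_neg] at h2
    have h1' := (div_le_iff₀ hv').mp h1
    have h2' := (div_le_iff₀ hv').mp h2
    rw [abs_le]
    constructor <;> linarith

lemma wsn_le_of (b : H →ₗ[ℝ] V →ₗ[ℝ] ℝ) {K : ℝ} {q : V} (hK : 0 ≤ K)
    (h : ∀ v : H, v ≠ 0 → b v q ≤ K * ‖v‖) : weakSemiNorm b q ≤ K := by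
  unfold weakSemiNorm
  rcases isEmpty_or_nonempty {v : H // v ≠ 0} with he | he
  · rw [Real.iSup_of_isEmpty]; exact hK
  · refine ciSup_le ?_
    rintro ⟨v, hv⟩
    have hv' : (0:ℝ) < ‖v‖ := norm_pos_iff.mpr hv
    rw [div_le_iff₀ hv']
    exact h v hv

end Helpers

set_option maxHeartbeats 1000000

/-- First inequality of Theorem 2.2: the stability estimate
`‖u‖_H + |p|_V̄ + ε‖p‖_V ≤ C₁ sup (a(u,v)+b(v,p)-b(u,q)+ε²c(p,q))/(‖v‖ + |q|_V̄ + ε‖q‖)`,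
with `C₁` depending only on the continuity/coercivity constant `C`. -/
theorem mixed_sup_lower_bound (C : ℝ) (hC : 0 < C) :
    ∃ C₁ : ℝ, 0 < C₁ ∧
      ∀ (H V : Type) [NormedAddCommGroup H] [InnerProductSpace ℝ H] [CompleteSpace H]
        [NormedAddCommGroup V] [InnerProductSpace ℝ V] [CompleteSpace V]
        (a : H →ₗ[ℝ] H →ₗ[ℝ] ℝ) (c : V →ₗ[ℝ] V →ₗ[ℝ] ℝ) (b : H →ₗ[ℝ] V →ₗ[ℝ] ℝ),
        (∀ u v : H, a u v = a v u) →
        (∀ u v : H, |a u v| ≤ C * ‖u‖ * ‖v‖) →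
        (∀ u : H, C⁻¹ * ‖u‖ ^ 2 ≤ a u u) →
        (∀ p q : V, c p q = c q p) →
        (∀ p q : V, |c p q| ≤ C * ‖p‖ * ‖q‖) →
        (∀ p : V, C⁻¹ * ‖p‖ ^ 2 ≤ c p p) →
        (∀ (v : H) (q : V), |b v q| ≤ C * ‖v‖ * ‖q‖) →
        ∀ (u : H) (p : V) (ε : ℝ), 0 < ε → ε ≤ 1 →
          ‖u‖ + weakSemiNorm b p + ε * ‖p‖ ≤
            C₁ * (⨆ vq : {vq : H × V // vq ≠ 0},
              (a u (vq : H × V).1 + b (vq : H × V).1 p - b u (vq : H × V).2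
                  + ε ^ 2 * c p (vq : H × V).2) /
                (‖(vq : H × V).1‖ + weakSemiNorm b (vq : H × V).2 + ε * ‖(vq : H × V).2‖)) := by
  refine ⟨(1 + C) * (2 * C ^ 2 + 4 * C + 1) + 1, by nlinarith, ?_⟩
  intro H V _ _ _ _ _ _ a c b hasymm ha hacoer hcsymm hc hccoer hb u p ε hε hε1
  set C₁ : ℝ := (1 + C) * (2 * C ^ 2 + 4 * C + 1) + 1 with hC₁def
  set f : {vq : H × V // vq ≠ 0} → ℝ := fun vq =>
      (a u (vq : H × V).1 + b (vq : H × V).1 p - b u (vq : H × V).2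
          + ε ^ 2 * c p (vq : H × V).2) /
        (‖(vq : H × V).1‖ + weakSemiNorm b (vq : H × V).2 + ε * ‖(vq : H × V).2‖) with hfdef
  set S : ℝ := ⨆ vq : {vq : H × V // vq ≠ 0}, f vq with hSdef
  show ‖u‖ + weakSemiNorm b p + ε * ‖p‖ ≤ C₁ * S
  have hnu : (0:ℝ) ≤ ‖u‖ := norm_nonneg _
  have hnp : (0:ℝ) ≤ ‖p‖ := norm_nonneg _
  rcases eq_or_ne (u, p) (0 : H × V) with h0 | h0
  · -- degenerate case u = 0, p = 0
    have hu : u = 0 := congrArg Prod.fst h0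
    have hp : p = 0 := congrArg Prod.snd h0
    subst hu; subst hp
    have hfz : ∀ vq : {vq : H × V // vq ≠ 0}, f vq = 0 := by
      intro vq
      rw [hfdef]
      simp
    have hS : S = 0 := by
      rw [hSdef]
      simp only [hfz]
      exact Real.iSup_const_zero
    rw [hS]
    simp [wsn_zero]
  · -- main case
    have hNnn : ∀ vq : H × V, 0 ≤ ‖vq.1‖ + weakSemiNorm b vq.2 + ε * ‖vq.2‖ := by
      intro vq
      have := wsn_nonneg b hb vq.2
      positivity
    have hNpos : ∀ vq : H × V, vq ≠ 0 → 0 < ‖vq.1‖ + weakSemiNorm b vq.2 + ε * ‖vq.2‖ := by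
      intro vq hvq
      have h2 := wsn_nonneg b hb vq.2
      rcases eq_or_ne vq.1 0 with h1 | h1
      · have h2' : vq.2 ≠ 0 := by
          intro h2'
          exact hvq (Prod.ext h1 h2')
        have h3 : (0:ℝ) < ‖vq.2‖ := norm_pos_iff.mpr h2'
        have h4 : (0:ℝ) < ε * ‖vq.2‖ := by positivity
        have h5 : (0:ℝ) ≤ ‖vq.1‖ := norm_nonneg _
        linarith
      · have h3 : (0:ℝ) < ‖vq.1‖ := norm_pos_iff.mpr h1
        have h4 : (0:ℝ) ≤ ε * ‖vq.2‖ := by positivity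
        linarith
    -- boundedness of f
    have hfB : BddAbove (Set.range f) := by
      refine ⟨C * ‖u‖ + C * ‖p‖ + ‖u‖ + C * ‖p‖, ?_⟩
      rintro x ⟨⟨⟨v, q⟩, hvq⟩, rfl⟩
      have hN : 0 < ‖v‖ + weakSemiNorm b q + ε * ‖q‖ := hNpos (v, q) hvq
      show (a u v + b v p - b u q + ε ^ 2 * c p q) /
          (‖v‖ + weakSemiNorm b q + ε * ‖q‖) ≤ C * ‖u‖ + C * ‖p‖ + ‖u‖ + C * ‖p‖
      rw [div_le_iff₀ hN]
      have h1 : a u v ≤ C * ‖u‖ * ‖v‖ := le_trans (le_abs_self _) (ha u v)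
      have h2 : b v p ≤ C * ‖v‖ * ‖p‖ := le_trans (le_abs_self _) (hb v p)
      have h3 : -(b u q) ≤ weakSemiNorm b q * ‖u‖ :=
        le_trans (neg_le_abs _) (abs_b_le_wsn b hb u q)
      have h4 : ε ^ 2 * c p q ≤ ε ^ 2 * (C * ‖p‖ * ‖q‖) := by
        have h4' := le_trans (le_abs_self _) (hc p q)
        nlinarith [sq_nonneg ε]
      have hwnn := wsn_nonneg b hb q
      have hnv : (0:ℝ) ≤ ‖v‖ := norm_nonneg _
      have hnq : (0:ℝ) ≤ ‖q‖ := norm_nonneg _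
      nlinarith [mul_nonneg (mul_nonneg hC.le hnu) hwnn,
        mul_nonneg (mul_nonneg (mul_nonneg hC.le hnu) hε.le) hnq,
        mul_nonneg (mul_nonneg hC.le hnp) hnv,
        mul_nonneg (mul_nonneg hC.le hnp) hwnn,
        mul_nonneg (sub_nonneg.mpr hε1)
          (mul_nonneg hε.le (mul_nonneg (mul_nonneg hC.le hnp) hnq)),
        mul_nonneg hε.le (mul_nonneg (mul_nonneg hC.le hnp) hnq),
        mul_nonneg hnu hnv,
        mul_nonneg (mul_nonneg hnu hε.le) hnq]
    -- key inequality
    have hkey : ∀ (v : H) (q : V),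
        a u v + b v p - b u q + ε ^ 2 * c p q ≤
          S * (‖v‖ + weakSemiNorm b q + ε * ‖q‖) := by
      intro v q
      rcases eq_or_ne ((v, q) : H × V) 0 with hvq | hvq
      · have hv : v = 0 := congrArg Prod.fst hvq
        have hq : q = 0 := congrArg Prod.snd hvq
        subst hv; subst hq
        simp [wsn_zero]
      · have hN : 0 < ‖v‖ + weakSemiNorm b q + ε * ‖q‖ := hNpos (v, q) hvq
        have hle : (a u v + b v p - b u q + ε ^ 2 * c p q) /
            (‖v‖ + weakSemiNorm b q + ε * ‖q‖) ≤ S := le_ciSup hfB ⟨(v, q), hvq⟩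
        calc a u v + b v p - b u q + ε ^ 2 * c p q
            = ((a u v + b v p - b u q + ε ^ 2 * c p q) /
                (‖v‖ + weakSemiNorm b q + ε * ‖q‖)) *
              (‖v‖ + weakSemiNorm b q + ε * ‖q‖) := by field_simp
          _ ≤ S * (‖v‖ + weakSemiNorm b q + ε * ‖q‖) :=
              mul_le_mul_of_nonneg_right hle hN.le
    -- S ≥ 0
    have hS0 : 0 ≤ S := by
      have hle : (a u u + b u p - b u p + ε ^ 2 * c p p) /
          (‖u‖ + weakSemiNorm b p + ε * ‖p‖) ≤ S := le_ciSup hfB ⟨(u, p), h0⟩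
      refine le_trans ?_ hle
      apply div_nonneg _ (hNnn (u, p))
      have h1 := hacoer u
      have h2 := hccoer p
      have hCi : (0:ℝ) < C⁻¹ := by positivity
      nlinarith [sq_nonneg ‖u‖, sq_nonneg ‖p‖, sq_nonneg ε,
        mul_le_mul_of_nonneg_left h2 (sq_nonneg ε),
        mul_nonneg (sq_nonneg ε) (mul_nonneg hCi.le (sq_nonneg ‖p‖))]
    clear_value C₁ f S
    -- Step 1: coercivity estimate
    have h1 : C⁻¹ * ‖u‖ ^ 2 + ε ^ 2 * (C⁻¹ * ‖p‖ ^ 2) ≤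
        S * (‖u‖ + weakSemiNorm b p + ε * ‖p‖) := by
      have hk := hkey u p
      have ha' := hacoer u
      have hc' := hccoer p
      nlinarith [mul_le_mul_of_nonneg_left hc' (sq_nonneg ε)]
    -- Step 2: weak seminorm estimate
    have h2 : weakSemiNorm b p ≤ S + C * ‖u‖ := by
      refine wsn_le_of b (by positivity) ?_
      intro v hv
      have hk := hkey v 0
      simp only [wsn_zero, map_zero, norm_zero, mul_zero, add_zero] at hk
      have hav : -(a u v) ≤ C * ‖u‖ * ‖v‖ := le_trans (neg_le_abs _) (ha u v)
      nlinarith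
    -- Step 3: combine
    set X : ℝ := ‖u‖ + ε * ‖p‖ with hXdef
    clear_value X
    have hεp : (0:ℝ) ≤ ε * ‖p‖ := by positivity
    have hXnn : 0 ≤ X := by rw [hXdef]; linarith
    have hnuX : ‖u‖ ≤ X := by rw [hXdef]; linarith
    have hwp : 0 ≤ weakSemiNorm b p := wsn_nonneg b hb p
    have hq2 : X ^ 2 ≤ 2 * C * S * ((1 + C) * X + S) := by
      have hsq : X ^ 2 ≤ 2 * (‖u‖ ^ 2 + ε ^ 2 * ‖p‖ ^ 2) := by
        rw [hXdef]; nlinarith [sq_nonneg (‖u‖ - ε * ‖p‖)]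
      have hN : ‖u‖ + weakSemiNorm b p + ε * ‖p‖ ≤ (1 + C) * X + S := by
        have hCu : C * ‖u‖ ≤ C * X := mul_le_mul_of_nonneg_left hnuX hC.le
        rw [hXdef] at hCu ⊢
        linarith
      have hmul : S * (‖u‖ + weakSemiNorm b p + ε * ‖p‖) ≤ S * ((1 + C) * X + S) :=
        mul_le_mul_of_nonneg_left hN hS0
      have h1c : C⁻¹ * (‖u‖ ^ 2 + ε ^ 2 * ‖p‖ ^ 2) ≤ S * ((1 + C) * X + S) := by
        linarith [h1, hmul]
      have hA : ‖u‖ ^ 2 + ε ^ 2 * ‖p‖ ^ 2 ≤ C * (S * ((1 + C) * X + S)) := by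
        have h' := mul_le_mul_of_nonneg_left h1c hC.le
        rwa [← mul_assoc, mul_inv_cancel₀ hC.ne', one_mul] at h'
      linarith [hsq, hA]
    have hXS : X ≤ (2 * C ^ 2 + 4 * C + 1) * S := by
      rcases le_or_gt X S with h | h
      · linarith [mul_nonneg (by positivity : (0:ℝ) ≤ 2 * C ^ 2 + 4 * C) hS0]
      · have hX0 : 0 < X := lt_of_le_of_lt hS0 h
        have hss : S * S ≤ S * X := mul_le_mul_of_nonneg_left h.le hS0
        have hxx : X * X ≤ ((2 * C ^ 2 + 4 * C) * S) * X := by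
          linarith [hq2, mul_le_mul_of_nonneg_left hss (by positivity : (0:ℝ) ≤ 2 * C)]
        have hX1 : X ≤ (2 * C ^ 2 + 4 * C) * S := le_of_mul_le_mul_right hxx hX0
        linarith
    -- conclude
    have hstep : (1 + C) * X ≤ (1 + C) * ((2 * C ^ 2 + 4 * C + 1) * S) :=
      mul_le_mul_of_nonneg_left hXS (by positivity)
    have hCu : C * ‖u‖ ≤ C * X := mul_le_mul_of_nonneg_left hnuX hC.le
    have hfin : ‖u‖ + weakSemiNorm b p + ε * ‖p‖ ≤ (1 + C) * X + S := by
      rw [hXdef] at hCu ⊢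
      linarith
    rw [hC₁def]
    linarith [hfin, hstep, hS0]
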